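/- Let 1 ≤ n ≤ d be integers, let y > 0 be a real number and let V ∈ M_{d×n}(ℝ). Then there exists γ ∈ SL_{d+n}(ℤ) with γ·n_+(V)·D(y) ∈ H if and only if y is a positive integer q and there exists a q-primitive matrix R ∈ M_{d×n}(ℤ) such that V − q^{−1}R has all entries in ℤ. -/

import Mathlib

/-!
Let `E = (0; Iₙ)` pick out the last `n` columns. If `h = γ n₊(V) D(y) ∈ H`, then `h E = E`, so
the last `n` columns of the integer matrix `γ⁻¹ = adj γ` are `n₊(V) D(y) E = (yV; y Iₙ)`. Hence
`y = q` is a positive integer, `R = qV` is integral, and the last block row of `γ γ⁻¹ = 1` reads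
`γ₂₁ R + q γ₂₂ = Iₙ`, i.e. `R` has a left inverse mod `q`.

Conversely, an integral translate `V + M` is absorbed by `γ ↦ γ n₊(-M)`, so let `V = R/q`. Since
`x ↦ xR mod q` maps `ℤᵈ` onto `(ℤ/qℤ)ⁿ`, its kernel has index `qⁿ`, and a basis of it gives `P`
with `det P = qⁿ` and `PR = qB`; a left inverse of `R` mod `q` gives `SR = I + qT`. Then
`γ = (P -B; S -T)` satisfies `γ n₊(R/q) D(q) = (cP 0; cS I)` with `c = q^{-n/d}`, which lies in
`H` (for `n = d` take `P = qI`, so `cP = I`), and `det γ = 1` follows by taking determinants.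
-/

noncomputable section

/-- `n₊(V) = (I_d V; 0 I_n)`. -/
def nPlus (d n : ℕ) (V : Matrix (Fin d) (Fin n) ℝ) :
    Matrix (Fin d ⊕ Fin n) (Fin d ⊕ Fin n) ℝ :=
  Matrix.fromBlocks 1 V 0 1

/-- `D(y) = diag(y^{−n/d}·I_d, y·I_n)`. -/
def Dy (d n : ℕ) (y : ℝ) : Matrix (Fin d ⊕ Fin n) (Fin d ⊕ Fin n) ℝ :=
  Matrix.fromBlocks ((y ^ (-(n : ℝ) / (d : ℝ))) • (1 : Matrix (Fin d) (Fin d) ℝ)) 0 0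
    (y • (1 : Matrix (Fin n) (Fin n) ℝ))

/-- Membership in the subgroup
`H = {(A 0; U I_n) : A ∈ SL_d(ℝ), U ∈ M_{n×d}(ℝ), A = I if n = d}`. -/
def memH (d n : ℕ) (M : Matrix (Fin d ⊕ Fin n) (Fin d ⊕ Fin n) ℝ) : Prop :=
  ∃ (A : Matrix (Fin d) (Fin d) ℝ) (U : Matrix (Fin n) (Fin d) ℝ),
    A.det = 1 ∧ (n = d → A = 1) ∧ M = Matrix.fromBlocks A 0 U 1

/-- `R ∈ M_{d×n}(ℤ)` is `q`-primitive if the rows of `R mod q` generate `(ℤ/qℤ)ⁿ`. -/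
def qPrimitive (d n q : ℕ) (R : Matrix (Fin d) (Fin n) ℤ) : Prop :=
  Submodule.span (ZMod q)
    (Set.range fun i : Fin d => (R.map (Int.cast : ℤ → ZMod q)) i) = ⊤

open Matrix

lemma Matrix.map_intCast_mul {l m n R : Type*} [Fintype m] [Ring R]
    (M : Matrix l m ℤ) (N : Matrix m n ℤ) :
    (M * N).map (Int.cast : ℤ → R) = M.map (Int.cast : ℤ → R) * N.map (Int.cast : ℤ → R) :=
  Matrix.map_mul (f := Int.castRingHom R)

lemma Matrix.map_intCast_natCast_smul {m n R : Type*} [Ring R] (q : ℕ) (X : Matrix m n ℤ) :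
    ((q : ℤ) • X).map (Int.cast : ℤ → R) = (q : R) • X.map (Int.cast : ℤ → R) := by
  ext
  simp

lemma Matrix.map_intCast_zmod_eq_iff {m n : Type*} (q : ℕ) (X Y : Matrix m n ℤ) :
    X.map (Int.cast : ℤ → ZMod q) = Y.map (Int.cast : ℤ → ZMod q) ↔
      ∃ T : Matrix m n ℤ, X = Y + (q : ℤ) • T := by
  constructor
  · intro h
    choose T hT using fun i j =>
      (ZMod.intCast_eq_intCast_iff_dvd_sub (Y i j) (X i j) q).mp (congrFun (congrFun h i) j).symm
    exact ⟨of T, ext fun i j => by simp [← hT]⟩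
  · rintro ⟨T, rfl⟩
    ext i j
    simp

section qPrimitive

variable {d n q : ℕ} {R : Matrix (Fin d) (Fin n) ℤ}

lemma qPrimitive_iff_surjective_vecMul :
    qPrimitive d n q R ↔ Function.Surjective (R.map (Int.cast : ℤ → ZMod q)).vecMul := by
  change Submodule.span _ (Set.range (R.map (Int.cast : ℤ → ZMod q)).row) = ⊤ ↔ _
  rw [← range_vecMulLinear]
  exact LinearMap.range_eq_top

lemma qPrimitive_iff_exists_mul_eq_one_add_smul :
    qPrimitive d n q R ↔ ∃ (S : Matrix (Fin n) (Fin d) ℤ) (T : Matrix (Fin n) (Fin n) ℤ),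
      S * R = 1 + (q : ℤ) • T := by
  rw [qPrimitive_iff_surjective_vecMul, vecMul_surjective_iff_exists_left_inverse]
  have hone : (1 : Matrix (Fin n) (Fin n) ℤ).map (Int.cast : ℤ → ZMod q) = 1 := by simp
  constructor
  · rintro ⟨S, hS⟩
    have hlift : (S.map fun x => (x.cast : ℤ)).map (Int.cast : ℤ → ZMod q) = S := by
      ext
      simp
    refine ⟨S.map fun x => (x.cast : ℤ), (map_intCast_zmod_eq_iff q _ _).mp ?_⟩
    rw [map_intCast_mul, hlift, hS, hone]
  · rintro ⟨S, T, h⟩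
    refine ⟨S.map Int.cast, ?_⟩
    rw [← map_intCast_mul, ← hone]
    exact (map_intCast_zmod_eq_iff q _ _).mpr ⟨T, h⟩

end qPrimitive

lemma AddSubgroup.exists_matrix_rows_mem_det_eq_index {ι : Type*} [Fintype ι] [DecidableEq ι]
    (H : AddSubgroup (ι → ℤ)) (hH : H.index ≠ 0) :
    ∃ P : Matrix ι ι ℤ, (∀ i, P i ∈ H) ∧ P.det = H.index := by
  obtain ⟨e⟩ := Int.addSubgroup_index_ne_zero_iff.mp hH
  let b : Module.Basis ι ℤ H := (Pi.basisFun ℤ ι).map e.toIntLinearEquiv.symm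
  let P : Matrix ι ι ℤ := of fun i => b i
  have hP : ∀ i, P i ∈ H := fun i => (b i).2
  have hdet : P.det.natAbs = H.index := by
    rw [AddSubgroup.index_eq_natAbs_det (Pi.basisFun ℤ ι) H b, Pi.basisFun_det_apply]
  rcases Int.natAbs_eq_iff.mp hdet with h | h
  · exact ⟨P, hP, h⟩
  obtain ⟨i₀⟩ : Nonempty ι := by
    by_contra hι
    rw [not_nonempty_iff] at hι
    rw [det_isEmpty] at h
    omega
  refine ⟨P.updateRow i₀ ((-1 : ℤ) • P i₀), fun i => ?_, ?_⟩
  · rcases eq_or_ne i i₀ with rfl | hi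
    · simpa using H.neg_mem (hP i)
    · simpa [hi] using hP i
  · rw [det_updateRow_smul, updateRow_eq_self, h]
    ring

lemma exists_det_eq_pow_mul_eq_smul_of_qPrimitive {d n q : ℕ} [NeZero q]
    {R : Matrix (Fin d) (Fin n) ℤ} (hR : qPrimitive d n q R) :
    ∃ (P : Matrix (Fin d) (Fin d) ℤ) (B : Matrix (Fin d) (Fin n) ℤ),
      P.det = (q : ℤ) ^ n ∧ P * R = (q : ℤ) • B ∧ (n = d → P = (q : ℤ) • 1) := by
  by_cases hnd : n = d
  · subst hnd
    exact ⟨(q : ℤ) • 1, R, by rw [det_smul, det_one, mul_one, Fintype.card_fin], by simp,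
      fun _ => rfl⟩
  let φ : (Fin d → ℤ) →+ (Fin n → ZMod q) :=
    (R.map (Int.cast : ℤ → ZMod q)).vecMulLinear.toAddMonoidHom.comp
      ((Int.castAddHom (ZMod q)).compLeft (Fin d))
  have hφ : Function.Surjective φ :=
    (qPrimitive_iff_surjective_vecMul.mp hR).comp ZMod.intCast_surjective.comp_left
  have hindex : φ.ker.index = q ^ n := by
    rw [AddSubgroup.index_ker, AddMonoidHom.range_eq_top.mpr hφ,
      Nat.card_congr AddSubgroup.topEquiv.toEquiv]
    simp
  obtain ⟨P, hPφ, hPdet⟩ :=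
    φ.ker.exists_matrix_rows_mem_det_eq_index (by simp [hindex, NeZero.ne q])
  have hPR : (P * R).map (Int.cast : ℤ → ZMod q) = (0 : Matrix _ _ ℤ).map Int.cast := by
    ext i j
    rw [map_intCast_mul, mul_apply_eq_vecMul]
    exact (congrFun (hPφ i) j).trans (by simp)
  obtain ⟨B, hB⟩ := (map_intCast_zmod_eq_iff q _ _).mp hPR
  exact ⟨P, B, by rw [hPdet, hindex]; push_cast; rfl, by rw [hB, zero_add],
    fun h => absurd h hnd⟩

abbrev lastCoords (d n : ℕ) (R : Type*) [Zero R] [One R] : Matrix (Fin d ⊕ Fin n) (Fin n) R :=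
  fromRows 0 1

@[simp]
lemma map_intCast_lastCoords (d n : ℕ) (R : Type*) [Ring R] :
    (lastCoords d n ℤ).map (Int.cast : ℤ → R) = lastCoords d n R := by
  simp [fromRows_map]

section Real

variable {d n : ℕ}

lemma rpow_neg_div_pow_mul_pow {y : ℝ} (hy : 0 < y) (hd : d ≠ 0) :
    (y ^ (-(n : ℝ) / d)) ^ d * y ^ n = 1 := by
  rw [← Real.rpow_natCast _ d, ← Real.rpow_mul hy.le, div_mul_cancel₀ _ (by exact_mod_cast hd),
    Real.rpow_neg hy.le, Real.rpow_natCast, inv_mul_cancel₀ (by positivity)]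

lemma det_nPlus (V : Matrix (Fin d) (Fin n) ℝ) : (nPlus d n V).det = 1 := by
  simp [nPlus]

lemma det_Dy {y : ℝ} (hy : 0 < y) (hd : d ≠ 0) : (Dy d n y).det = 1 := by
  simpa [Dy, det_fromBlocks_zero₂₁, det_smul] using rpow_neg_div_pow_mul_pow (n := n) hy hd

lemma nPlus_mul_Dy_mul_lastCoords (V : Matrix (Fin d) (Fin n) ℝ) (y : ℝ) :
    nPlus d n V * Dy d n y * lastCoords d n ℝ = fromRows (y • V) (y • 1) := by
  rw [nPlus, Dy, Matrix.mul_assoc, fromBlocks_mul_fromRows, fromBlocks_mul_fromRows]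
  simp

lemma memH.mul_lastCoords {M : Matrix (Fin d ⊕ Fin n) (Fin d ⊕ Fin n) ℝ} (hM : memH d n M) :
    M * lastCoords d n ℝ = lastCoords d n ℝ := by
  obtain ⟨A, U, -, -, rfl⟩ := hM
  simp [fromBlocks_mul_fromRows]

end Real

section Forward

variable {d n : ℕ} {y : ℝ} {V : Matrix (Fin d) (Fin n) ℝ}
  {γ : Matrix (Fin d ⊕ Fin n) (Fin d ⊕ Fin n) ℤ}

lemma exists_int_fromRows_of_memH (hγ : γ.det = 1)
    (h : memH d n (γ.map (Int.cast : ℤ → ℝ) * nPlus d n V * Dy d n y)) :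
    ∃ X : Matrix (Fin d ⊕ Fin n) (Fin n) ℤ,
      γ * X = lastCoords d n ℤ ∧ X.map (Int.cast : ℤ → ℝ) = fromRows (y • V) (y • 1) := by
  -- Without the ascription on `1`, this `*` elaborates to the `CStarMatrix` multiplication.
  have hcol : γ.map (Int.cast : ℤ → ℝ) * fromRows (y • V) (y • (1 : Matrix (Fin n) (Fin n) ℝ)) =
      lastCoords d n ℝ := by
    rw [← nPlus_mul_Dy_mul_lastCoords, ← Matrix.mul_assoc, ← Matrix.mul_assoc]
    exact h.mul_lastCoords
  refine ⟨adjugate γ * lastCoords d n ℤ, ?_, ?_⟩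
  · rw [← Matrix.mul_assoc, mul_adjugate, hγ, one_smul, Matrix.one_mul]
  · calc (adjugate γ * lastCoords d n ℤ).map (Int.cast : ℤ → ℝ)
        = (adjugate γ * γ).map (Int.cast : ℤ → ℝ) *
            fromRows (y • V) (y • (1 : Matrix (Fin n) (Fin n) ℝ)) := by
          rw [map_intCast_mul, map_intCast_mul, Matrix.mul_assoc, hcol, map_intCast_lastCoords]
      _ = fromRows (y • V) (y • 1) := by
          rw [adjugate_mul, hγ, one_smul, Matrix.map_one _ Int.cast_zero Int.cast_one,
            Matrix.one_mul]

lemma exists_qPrimitive_of_memH (hn : 1 ≤ n) (hy : 0 < y) (hγ : γ.det = 1)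
    (h : memH d n (γ.map (Int.cast : ℤ → ℝ) * nPlus d n V * Dy d n y)) :
    ∃ q : ℕ, 0 < q ∧ y = q ∧ ∃ R : Matrix (Fin d) (Fin n) ℤ,
      qPrimitive d n q R ∧ R.map (Int.cast : ℤ → ℝ) = (q : ℝ) • V := by
  obtain ⟨X, hγX, hX⟩ := exists_int_fromRows_of_memH hγ h
  obtain ⟨R, Q, rfl⟩ : ∃ R Q, X = fromRows R Q := ⟨_, _, (fromRows_toRows X).symm⟩
  rw [fromRows_map, fromRows_inj.eq_iff] at hX
  obtain ⟨hR, hQ⟩ := hX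
  have hQ_apply (i j : Fin n) : (Q i j : ℝ) = if i = j then y else 0 := by
    simpa [one_apply] using congrFun (congrFun hQ i) j
  let j₀ : Fin n := ⟨0, hn⟩
  obtain ⟨q, hq⟩ : ∃ q : ℕ, Q j₀ j₀ = q :=
    Int.eq_ofNat_of_zero_le ((Int.cast_nonneg_iff (R := ℝ)).mp (by simpa [hQ_apply] using hy.le))
  have hyq : y = q := by simpa [hq] using (hQ_apply j₀ j₀).symm
  have hQq : Q = (q : ℤ) • 1 := by
    ext i j
    exact Int.cast_injective (α := ℝ) (by simp [hQ_apply, hyq, one_apply])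
  refine ⟨q, by exact_mod_cast hyq ▸ hy, hyq, R, ?_, by rw [hR, hyq]⟩
  rw [← fromBlocks_toBlocks γ, fromBlocks_mul_fromRows, fromRows_inj.eq_iff, hQq] at hγX
  simp only [Matrix.mul_smul, Matrix.mul_one] at hγX
  refine qPrimitive_iff_exists_mul_eq_one_add_smul.mpr ⟨γ.toBlocks₂₁, -γ.toBlocks₂₂, ?_⟩
  rw [← hγX.2, smul_neg]
  abel

end Forward

section Backward

variable {d n : ℕ}

lemma nPlus_mul_nPlus (V W : Matrix (Fin d) (Fin n) ℝ) :
    nPlus d n V * nPlus d n W = nPlus d n (V + W) := by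
  simp [nPlus, fromBlocks_multiply, add_comm]

lemma exists_memH_add_intCast {y : ℝ} {V : Matrix (Fin d) (Fin n) ℝ}
    {γ : Matrix (Fin d ⊕ Fin n) (Fin d ⊕ Fin n) ℤ} (hγ : γ.det = 1)
    (h : memH d n (γ.map (Int.cast : ℤ → ℝ) * nPlus d n V * Dy d n y))
    (M : Matrix (Fin d) (Fin n) ℤ) :
    ∃ γ' : Matrix (Fin d ⊕ Fin n) (Fin d ⊕ Fin n) ℤ, γ'.det = 1 ∧
      memH d n (γ'.map (Int.cast : ℤ → ℝ) * nPlus d n (V + M.map Int.cast) * Dy d n y) := by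
  refine ⟨γ * fromBlocks 1 (-M) 0 1, by simp [hγ], ?_⟩
  have hM : (fromBlocks 1 (-M) 0 1).map (Int.cast : ℤ → ℝ) = nPlus d n (-M.map Int.cast) := by
    rw [fromBlocks_map, Matrix.map_neg _ Int.cast_neg]
    simp [nPlus]
  rwa [map_intCast_mul, hM, Matrix.mul_assoc (γ.map _), nPlus_mul_nPlus, add_left_comm,
    neg_add_cancel, add_zero]

lemma fromBlocks_mul_nPlus_mul_Dy {q : ℝ} (hq : q ≠ 0) {P : Matrix (Fin d) (Fin d) ℝ}
    {S : Matrix (Fin n) (Fin d) ℝ} {R B : Matrix (Fin d) (Fin n) ℝ} {T : Matrix (Fin n) (Fin n) ℝ}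
    (hPR : P * R = q • B) (hSR : S * R = 1 + q • T) :
    fromBlocks P (-B) S (-T) * nPlus d n (q⁻¹ • R) * Dy d n q =
      fromBlocks (q ^ (-(n : ℝ) / d) • P) 0 (q ^ (-(n : ℝ) / d) • S) 1 := by
  rw [nPlus, Dy, fromBlocks_multiply, fromBlocks_multiply]
  simp [Matrix.mul_smul, hPR, hSR, smul_smul, hq]

variable {q : ℕ} {R : Matrix (Fin d) (Fin n) ℤ}

lemma exists_memH_of_qPrimitive (hd : d ≠ 0) (hq : 0 < q) (hR : qPrimitive d n q R) :
    ∃ γ : Matrix (Fin d ⊕ Fin n) (Fin d ⊕ Fin n) ℤ, γ.det = 1 ∧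
      memH d n (γ.map (Int.cast : ℤ → ℝ) * nPlus d n ((q : ℝ)⁻¹ • R.map (Int.cast : ℤ → ℝ)) *
        Dy d n q) := by
  have : NeZero q := ⟨hq.ne'⟩
  have hq' : (q : ℝ) ≠ 0 := by positivity
  obtain ⟨P, B, hPdet, hPR, hPd⟩ := exists_det_eq_pow_mul_eq_smul_of_qPrimitive hR
  obtain ⟨S, T, hST⟩ := qPrimitive_iff_exists_mul_eq_one_add_smul.mp hR
  set c : ℝ := (q : ℝ) ^ (-(n : ℝ) / d) with hc
  have hγ : (fromBlocks P (-B) S (-T)).map (Int.cast : ℤ → ℝ) *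
      nPlus d n ((q : ℝ)⁻¹ • R.map (Int.cast : ℤ → ℝ)) * Dy d n q =
        fromBlocks (c • P.map (Int.cast : ℤ → ℝ)) 0 (c • S.map (Int.cast : ℤ → ℝ)) 1 := by
    rw [fromBlocks_map, Matrix.map_neg _ Int.cast_neg, Matrix.map_neg _ Int.cast_neg]
    refine fromBlocks_mul_nPlus_mul_Dy hq' ?_ ?_
    · rw [← map_intCast_mul, hPR, map_intCast_natCast_smul]
    · rw [← map_intCast_mul, hST, Matrix.map_add _ Int.cast_add, map_intCast_natCast_smul,
        Matrix.map_one _ Int.cast_zero Int.cast_one]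
  have hA : (c • P.map (Int.cast : ℤ → ℝ)).det = 1 := by
    rw [det_smul, Fintype.card_fin, ← Int.cast_det, hPdet]
    push_cast
    exact rpow_neg_div_pow_mul_pow (by positivity) hd
  refine ⟨fromBlocks P (-B) S (-T), ?_, c • P.map Int.cast, c • S.map Int.cast, hA, ?_, hγ⟩
  · have hdet := congrArg det hγ
    rw [det_mul, det_mul, det_nPlus, det_Dy (by positivity) hd, ← Int.cast_det,
      det_fromBlocks_zero₁₂, hA, det_one] at hdet
    simpa using hdet
  · intro hnd
    have hc' : c = (q : ℝ)⁻¹ := by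
      rw [hc, hnd, neg_div, div_self (by exact_mod_cast hd), Real.rpow_neg_one]
    rw [hPd hnd, map_intCast_natCast_smul, Matrix.map_one _ Int.cast_zero Int.cast_one, smul_smul,
      hc', inv_mul_cancel₀ hq', one_smul]

end Backward

theorem rational_point_in_H_iff (d n : ℕ) (hn : 1 ≤ n) (hnd : n ≤ d)
    (y : ℝ) (hy : 0 < y) (V : Matrix (Fin d) (Fin n) ℝ) :
    (∃ γ : Matrix (Fin d ⊕ Fin n) (Fin d ⊕ Fin n) ℤ,
      γ.det = 1 ∧ memH d n ((γ.map (Int.cast : ℤ → ℝ)) * nPlus d n V * Dy d n y)) ↔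
    (∃ q : ℕ, 0 < q ∧ y = (q : ℝ) ∧
      ∃ R : Matrix (Fin d) (Fin n) ℤ, qPrimitive d n q R ∧
        ∀ i j, ∃ m : ℤ, V i j - (R i j : ℝ) / (q : ℝ) = (m : ℝ)) := by
  constructor
  · rintro ⟨γ, hγ, hH⟩
    obtain ⟨q, hq, hyq, R, hR, hRV⟩ := exists_qPrimitive_of_memH hn hy hγ hH
    refine ⟨q, hq, hyq, R, hR, fun i j => ⟨0, ?_⟩⟩
    have hRij : (R i j : ℝ) = q * V i j := by simpa using congrFun (congrFun hRV i) j
    rw [hRij, mul_div_cancel_left₀ _ (by positivity), sub_self, Int.cast_zero]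
  · rintro ⟨q, hq, rfl, R, hR, hV⟩
    choose M hM using hV
    have hVRM : V = (q : ℝ)⁻¹ • R.map (Int.cast : ℤ → ℝ) + (of M).map (Int.cast : ℤ → ℝ) := by
      ext i j
      simp [← hM i j, div_eq_inv_mul]
    obtain ⟨γ, hγ, hH⟩ := exists_memH_of_qPrimitive (by omega) hq hR
    rw [hVRM]
    exact exists_memH_add_intCast hγ hH (of M)

end
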